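/- Let Λ be a finite label set and let L be ANY set of trees over Λ (not assumed to be a regular tree language). Then the set B_L' = { X # Y | X and Y are trees over Λ and the pair (X, Y) is L-semibad } is a regular tree language over Option Λ. (The proof uses Kruskal's tree theorem: trees over a finite label set are well-quasi-ordered by topological containment.) -/

import Mathlib

/-- A finite rooted labeled binary tree over label set `Λ`. -/
inductive LTree (Λ : Type) : Type
  | leaf : Λ → LTree Λ
  | node : Λ → LTree Λ → LTree Λ → LTree Λ

/-- Topological containment of rooted labeled binary trees: the least relation such that
(i) `leaf a ≼ leaf a`; (ii) `leaf a ≼ node a T₁ T₂`; (iii) if `U ≼ T₁` or `U ≼ T₂` then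
`U ≼ node b T₁ T₂`; (iv) if (`U₁ ≼ T₁` and `U₂ ≼ T₂`) or (`U₁ ≼ T₂` and `U₂ ≼ T₁`) then
`node a U₁ U₂ ≼ node a T₁ T₂`.  (The disjunctive rules are split into two constructors each.) -/
inductive TopCont {Λ : Type} : LTree Λ → LTree Λ → Prop
  | leaf_leaf (a : Λ) : TopCont (.leaf a) (.leaf a)
  | leaf_node (a : Λ) (T₁ T₂ : LTree Λ) : TopCont (.leaf a) (.node a T₁ T₂)
  | subtree_left (U : LTree Λ) (b : Λ) (T₁ T₂ : LTree Λ) :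
      TopCont U T₁ → TopCont U (.node b T₁ T₂)
  | subtree_right (U : LTree Λ) (b : Λ) (T₁ T₂ : LTree Λ) :
      TopCont U T₂ → TopCont U (.node b T₁ T₂)
  | node_node (a : Λ) (U₁ U₂ T₁ T₂ : LTree Λ) :
      TopCont U₁ T₁ → TopCont U₂ T₂ → TopCont (.node a U₁ U₂) (.node a T₁ T₂)
  | node_node_swap (a : Λ) (U₁ U₂ T₁ T₂ : LTree Λ) :
      TopCont U₁ T₂ → TopCont U₂ T₁ → TopCont (.node a U₁ U₂) (.node a T₁ T₂)

/-- A deterministic bottom-up tree automaton over label set `Λ`. -/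
structure TreeAutomaton (Λ : Type) where
  State : Type
  fintypeState : Fintype State
  accept : Set State
  m0 : Λ → State
  m2 : Λ → State → State → State
  m2_comm : ∀ a s t, m2 a s t = m2 a t s

/-- The run of a tree automaton on a tree. -/
def TreeAutomaton.run {Λ : Type} (M : TreeAutomaton Λ) : LTree Λ → M.State
  | .leaf a => M.m0 a
  | .node a T₁ T₂ => M.m2 a (M.run T₁) (M.run T₂)

/-- A tree automaton accepts a tree if its run ends in an accepting state. -/
def TreeAutomaton.Accepts {Λ : Type} (M : TreeAutomaton Λ) (T : LTree Λ) : Prop :=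
  M.run T ∈ M.accept

/-- A set of trees is a regular tree language if some tree automaton accepts
exactly the trees in it. -/
def IsRegularTreeLang {Λ : Type} (L : Set (LTree Λ)) : Prop :=
  ∃ M : TreeAutomaton Λ, ∀ T, T ∈ L ↔ M.Accepts T

/-- Relabel a tree by applying `f` to every label. -/
def LTree.relabel {Λ Λ' : Type} (f : Λ → Λ') : LTree Λ → LTree Λ'
  | .leaf a => .leaf (f a)
  | .node a T₁ T₂ => .node (f a) (relabel f T₁) (relabel f T₂)

/-- `X # Y`: a root labeled `none` with child subtrees the `some`-relabelings of `X` and `Y`. -/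
def LTree.hash {Λ : Type} (X Y : LTree Λ) : LTree (Option Λ) :=
  .node none (X.relabel some) (Y.relabel some)

/-- `(X, Y)` is an `L`-semibad pair if no `Z ∈ L` topologically contains both `X` and `Y`. -/
def Semibad {Λ : Type} (L : Set (LTree Λ)) (X Y : LTree Λ) : Prop :=
  ¬ ∃ Z ∈ L, TopCont X Z ∧ TopCont Y Z

/-!
By Kruskal's tree theorem, pairs of trees ordered componentwise by `≼` are well-quasi-ordered.
Being `L`-semibad is upward closed, so the semibad pairs are exactly the pairs lying above one
of finitely many semibad pairs `(Xᵢ, Yᵢ)`. Hence whether `(X, Y)` is semibad depends only on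
which of the finitely many trees `U ≼ Xᵢ, Yᵢ` are contained in `X` and which in `Y`. This
finite "profile" of a tree is computed bottom-up by an automaton, since the profile of a node
is determined by its label and the profiles of its children.
-/

open Set Function

section

variable {Λ : Type}

namespace TopCont

protected theorem refl : ∀ T : LTree Λ, TopCont T T
  | .leaf a => .leaf_leaf a
  | .node a T₁ T₂ => .node_node a T₁ T₂ T₁ T₂ (TopCont.refl T₁) (TopCont.refl T₂)

protected theorem trans {U V W : LTree Λ} (h₁ : TopCont U V) (h₂ : TopCont V W) :
    TopCont U W := by
  induction h₂ generalizing U with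
  | leaf_leaf => exact h₁
  | leaf_node a T₁ T₂ => cases h₁; exact .leaf_node a T₁ T₂
  | subtree_left _ _ _ _ _ ih => exact .subtree_left _ _ _ _ (ih h₁)
  | subtree_right _ _ _ _ _ ih => exact .subtree_right _ _ _ _ (ih h₁)
  | node_node _ _ _ _ _ _ _ ih₁ ih₂ =>
    cases h₁ with
    | leaf_node => exact .leaf_node ..
    | subtree_left _ _ _ _ h => exact .subtree_left _ _ _ _ (ih₁ h)
    | subtree_right _ _ _ _ h => exact .subtree_right _ _ _ _ (ih₂ h)
    | node_node _ _ _ _ _ h h' => exact .node_node _ _ _ _ _ (ih₁ h) (ih₂ h')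
    | node_node_swap _ _ _ _ _ h h' => exact .node_node_swap _ _ _ _ _ (ih₂ h) (ih₁ h')
  | node_node_swap _ _ _ _ _ _ _ ih₁ ih₂ =>
    cases h₁ with
    | leaf_node => exact .leaf_node ..
    | subtree_left _ _ _ _ h => exact .subtree_right _ _ _ _ (ih₁ h)
    | subtree_right _ _ _ _ h => exact .subtree_left _ _ _ _ (ih₂ h)
    | node_node _ _ _ _ _ h h' => exact .node_node_swap _ _ _ _ _ (ih₁ h) (ih₂ h')
    | node_node_swap _ _ _ _ _ h h' => exact .node_node _ _ _ _ _ (ih₂ h) (ih₁ h')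

instance : IsPreorder (LTree Λ) TopCont where
  refl := TopCont.refl
  trans _ _ _ := TopCont.trans

theorem left_node (a : Λ) (T₁ T₂ : LTree Λ) : TopCont T₁ (.node a T₁ T₂) :=
  .subtree_left _ _ _ _ (TopCont.refl T₁)

theorem right_node (a : Λ) (T₁ T₂ : LTree Λ) : TopCont T₂ (.node a T₁ T₂) :=
  .subtree_right _ _ _ _ (TopCont.refl T₂)

theorem node_swap (a : Λ) (T₁ T₂ : LTree Λ) : TopCont (.node a T₁ T₂) (.node a T₂ T₁) :=
  .node_node_swap _ _ _ _ _ (TopCont.refl T₁) (TopCont.refl T₂)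

end TopCont

theorem topCont_leaf_iff {U : LTree Λ} {a : Λ} : TopCont U (.leaf a) ↔ U = .leaf a :=
  ⟨fun h => by cases h; rfl, fun h => h ▸ .leaf_leaf a⟩

theorem topCont_node_iff {U T₁ T₂ : LTree Λ} {a : Λ} :
    TopCont U (.node a T₁ T₂) ↔ U = .leaf a ∨
      (∃ U₁ U₂, U = .node a U₁ U₂ ∧
        (TopCont U₁ T₁ ∧ TopCont U₂ T₂ ∨ TopCont U₁ T₂ ∧ TopCont U₂ T₁)) ∨
      TopCont U T₁ ∨ TopCont U T₂ := by
  constructor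
  · intro h
    cases h with
    | leaf_node => exact .inl rfl
    | subtree_left _ _ _ _ h => exact .inr (.inr (.inl h))
    | subtree_right _ _ _ _ h => exact .inr (.inr (.inr h))
    | node_node _ U₁ U₂ _ _ h₁ h₂ => exact .inr (.inl ⟨U₁, U₂, rfl, .inl ⟨h₁, h₂⟩⟩)
    | node_node_swap _ U₁ U₂ _ _ h₁ h₂ => exact .inr (.inl ⟨U₁, U₂, rfl, .inr ⟨h₁, h₂⟩⟩)
  · rintro (rfl | ⟨U₁, U₂, rfl, ⟨h₁, h₂⟩ | ⟨h₁, h₂⟩⟩ | h | h)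
    · exact .leaf_node ..
    · exact .node_node _ _ _ _ _ h₁ h₂
    · exact .node_node_swap _ _ _ _ _ h₁ h₂
    · exact .subtree_left _ _ _ _ h
    · exact .subtree_right _ _ _ _ h

namespace LTree

def size : LTree Λ → ℕ
  | .leaf _ => 1
  | .node _ T₁ T₂ => T₁.size + T₂.size + 1

theorem finite_setOf_topCont : ∀ T : LTree Λ, {U | TopCont U T}.Finite
  | .leaf a => by simp only [topCont_leaf_iff, ofPred_eq_eq_singleton, finite_singleton]
  | .node a T₁ T₂ => by
    have hD := (finite_setOf_topCont T₁).union (finite_setOf_topCont T₂)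
    refine (((finite_singleton (leaf a)).union (hD.image2 (node a) hD)).union hD).subset ?_
    rintro U hU
    rcases topCont_node_iff.1 hU with rfl | ⟨U₁, U₂, rfl, ⟨h₁, h₂⟩ | ⟨h₁, h₂⟩⟩ | h | h
    · exact .inl (.inl rfl)
    · exact .inl (.inr ⟨U₁, .inl h₁, U₂, .inr h₂, rfl⟩)
    · exact .inl (.inr ⟨U₁, .inr h₁, U₂, .inl h₂, rfl⟩)
    · exact .inr (.inl h)
    · exact .inr (.inr h)

end LTree

section MinBadSeq

open Set.PartiallyWellOrderedOn

variable {α : Type*} {r : α → α → Prop} [IsTrans α r]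

/-- The core of Nash-Williams' minimal bad sequence argument. -/
theorem partiallyWellOrderedOn_setOf_rel_rank_lt {rk : α → ℕ} {f : ℕ → α}
    (hf : IsBadSeq r univ f) (hmin : ∀ n, IsMinBadSeq r rk univ n f) :
    {x | ∃ n, r x (f n) ∧ rk x < rk (f n)}.PartiallyWellOrderedOn r := by
  classical
  rw [iff_forall_not_isBadSeq]
  rintro g ⟨hg, hgbad⟩
  have hex : ∃ n k, r (g k) (f n) ∧ rk (g k) < rk (f n) :=
    let ⟨n, hn⟩ := hg 0; ⟨n, 0, hn⟩
  obtain ⟨k, hk⟩ := Nat.find_spec hex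
  -- replacing `f` from the first index `n₀` above some `g k` by `g k, g (k + 1), …` yields a
  -- bad sequence that is smaller at `n₀`
  set n₀ := Nat.find hex
  refine hmin n₀ (fun m => if m < n₀ then f m else g (k + (m - n₀)))
    (fun m hm => (if_pos hm).symm) (by simpa using hk.2) ⟨fun _ => trivial, fun m n hmn => ?_⟩
  by_cases hn : n < n₀
  · simpa only [if_pos hn, if_pos (hmn.trans hn)] using hf.2 m n hmn
  by_cases hm : m < n₀
  · simp only [if_pos hm, if_neg hn]
    intro hr
    obtain ⟨n', hn'⟩ := hg (k + (n - n₀))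
    exact hf.2 m n' (hm.trans_le (Nat.find_min' hex ⟨_, hn'⟩)) (_root_.trans hr hn'.1)
  · simp only [if_neg hm, if_neg hn]
    exact hgbad _ _ (by omega)

end MinBadSeq

/-- Kruskal's tree theorem. -/
theorem LTree.wellQuasiOrdered_topCont [Finite Λ] : WellQuasiOrdered (@TopCont Λ) := by
  rw [← partiallyWellOrderedOn_univ_iff,
    PartiallyWellOrderedOn.iff_not_exists_isMinBadSeq LTree.size]
  rintro ⟨f, hf, hmin⟩
  set D := {x | ∃ n, TopCont x (f n) ∧ x.size < (f n).size}
  have hD : D.PartiallyWellOrderedOn TopCont := partiallyWellOrderedOn_setOf_rel_rank_lt hf hmin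
  have hleaves : (range (@leaf Λ)).PartiallyWellOrderedOn TopCont :=
    (finite_range _).partiallyWellOrderedOn
  have hnodes : ((fun p : Λ × LTree Λ × LTree Λ => node p.1 p.2.1 p.2.2) '' (univ ×ˢ D ×ˢ D)
      ).PartiallyWellOrderedOn TopCont := by
    have hlabels := (finite_univ (α := Λ)).partiallyWellOrderedOn (r := Eq)
    refine (hlabels.prod (hD.prod hD)).image_of_monotone_on ?_
    rintro ⟨a, U₁, U₂⟩ - ⟨b, T₁, T₂⟩ - ⟨rfl, h₁, h₂⟩
    exact .node_node _ _ _ _ _ h₁ h₂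
  obtain ⟨m, n, hmn, hr⟩ := (hleaves.union hnodes).exists_lt (f := f) fun n => by
    cases hfn : f n with
    | leaf a => exact .inl ⟨a, rfl⟩
    | node a T₁ T₂ =>
      refine .inr ⟨(a, T₁, T₂), ⟨trivial, ⟨n, ?_, ?_⟩, ⟨n, ?_, ?_⟩⟩, rfl⟩ <;>
        simp only [hfn, TopCont.left_node, TopCont.right_node, size] <;> omega
  exact hf.2 m n hmn hr

theorem WellQuasiOrdered.exists_finset_basis {α : Type*} {r : α → α → Prop}
    (hr : WellQuasiOrdered r) (S : Set α) :
    ∃ B : Finset α, ↑B ⊆ S ∧ ∀ x ∈ S, ∃ b ∈ B, r b x := by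
  classical
  by_contra! h
  have hnext : ∀ B : Finset α, ∃ x ∈ S, ∀ b ∈ B, b ∈ S → ¬ r b x := fun B => by
    obtain ⟨x, hx, hB⟩ := h (B.filter (· ∈ S)) fun b hb => (Finset.mem_filter.1 hb).2
    exact ⟨x, hx, fun b hb hbS => hB b (Finset.mem_filter.2 ⟨hb, hbS⟩)⟩
  choose next hnextS hnext using hnext
  -- greedily pick elements of `S` above none of the earlier picks: a bad sequence
  let F : ℕ → Finset α := fun n => Nat.rec ∅ (fun _ B => insert (next B) B) n
  have hF : Monotone F := monotone_nat_of_le_succ fun n => Finset.subset_insert _ _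
  obtain ⟨m, n, hmn, hr'⟩ := hr fun n => next (F n)
  exact hnext (F n) _ (hF hmn (Finset.mem_insert_self _ _)) (hnextS _) hr'

namespace LTree

structure IsCongr {S : Type} (φ : LTree Λ → S) : Prop where
  node_swap : ∀ a X₁ X₂, φ (node a X₁ X₂) = φ (node a X₂ X₁)
  node_congr : ∀ a {X₁ X₂ Y₁ Y₂}, φ X₁ = φ Y₁ → φ X₂ = φ Y₂ →
    φ (node a X₁ X₂) = φ (node a Y₁ Y₂)

def profile (G : Set (LTree Λ)) (X : LTree Λ) : 𝒫 G :=
  ⟨{U ∈ G | TopCont U X}, sep_subset _ _⟩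

variable {G : Set (LTree Λ)}

theorem profile_eq_profile_iff {X Y : LTree Λ} :
    profile G X = profile G Y ↔ ∀ U ∈ G, (TopCont U X ↔ TopCont U Y) := by
  simp only [Subtype.ext_iff, Set.ext_iff, profile, mem_sep_iff]
  exact forall_congr' fun U => ⟨fun h hU => by simpa [hU] using h, and_congr_right⟩

theorem topCont_of_profile_eq {U X Y : LTree Λ} (h : profile G X = profile G Y) (hU : U ∈ G)
    (hUX : TopCont U X) : TopCont U Y :=
  (profile_eq_profile_iff.1 h U hU).1 hUX

theorem isCongr_profile (hG : ∀ a U₁ U₂, node a U₁ U₂ ∈ G → U₁ ∈ G ∧ U₂ ∈ G) :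
    IsCongr (profile G) where
  node_swap _ _ _ := profile_eq_profile_iff.2 fun _ _ =>
    ⟨fun h => h.trans (TopCont.node_swap _ _ _), fun h => h.trans (TopCont.node_swap _ _ _)⟩
  node_congr a X₁ X₂ Y₁ Y₂ h₁ h₂ := by
    rw [profile_eq_profile_iff] at h₁ h₂ ⊢
    intro U hU
    have hchildren : ∀ U₁ U₂, U = node a U₁ U₂ →
        ((TopCont U₁ X₁ ∧ TopCont U₂ X₂ ∨ TopCont U₁ X₂ ∧ TopCont U₂ X₁) ↔
          (TopCont U₁ Y₁ ∧ TopCont U₂ Y₂ ∨ TopCont U₁ Y₂ ∧ TopCont U₂ Y₁)) := by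
      rintro U₁ U₂ rfl
      obtain ⟨hU₁, hU₂⟩ := hG _ _ _ hU
      rw [h₁ U₁ hU₁, h₂ U₂ hU₂, h₁ U₂ hU₂, h₂ U₁ hU₁]
    simp only [topCont_node_iff, h₁ U hU, h₂ U hU]
    exact or_congr_right (or_congr_left
      (exists₂_congr fun U₁ U₂ => and_congr_right (hchildren U₁ U₂)))

end LTree

namespace TreeAutomaton

section Hash

variable {S : Type} [Finite S] {φ : LTree Λ → S} (hφ : LTree.IsCongr φ)
  (P : S → S → Prop) [Std.Symm P]

/-- State `inl (φ X)` is reached on `X.relabel some`; state `inr p` on a tree with a node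
labelled `none`, which is accepted iff it is `X # Y` and `p` holds. The transition at `some a`
reads `φ` of a node off representatives of its children, which is sound when `φ` is a
congruence. -/
noncomputable def hashAutomaton : TreeAutomaton (Option Λ) where
  State := S ⊕ Prop
  fintypeState := have := Fintype.ofFinite S; inferInstance
  accept := {.inr True}
  m0
    | some a => .inl (φ (.leaf a))
    | none => .inr False
  m2
    | some a, .inl s, .inl t =>
      have : Nonempty (LTree Λ) := ⟨.leaf a⟩
      .inl (φ (.node a (invFun φ s) (invFun φ t)))
    | none, .inl s, .inl t => .inr (P s t)
    | _, _, _ => .inr False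
  m2_comm
    | some _, .inl _, .inl _ => congrArg Sum.inl (hφ.node_swap ..)
    | none, .inl _, .inl _ => congrArg Sum.inr (propext comm)
    | some _, .inl _, .inr _ | some _, .inr _, .inl _ | some _, .inr _, .inr _ => rfl
    | none, .inl _, .inr _ | none, .inr _, .inl _ | none, .inr _, .inr _ => rfl

theorem hashAutomaton_run_relabel :
    ∀ X : LTree Λ, (hashAutomaton hφ P).run (X.relabel some) = .inl (φ X)
  | .leaf a => rfl
  | .node a X₁ X₂ => by
    have : Nonempty (LTree Λ) := ⟨.leaf a⟩
    simp only [LTree.relabel, run, hashAutomaton_run_relabel X₁,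
      hashAutomaton_run_relabel X₂]
    exact congrArg Sum.inl (hφ.node_congr a (invFun_eq ⟨X₁, rfl⟩) (invFun_eq ⟨X₂, rfl⟩))

theorem hashAutomaton_m2_eq_inl {b : Option Λ} {r₁ r₂ : S ⊕ Prop} {s : S}
    (h : (hashAutomaton hφ P).m2 b r₁ r₂ = .inl s) :
    ∃ a s₁ s₂, b = some a ∧ r₁ = .inl s₁ ∧ r₂ = .inl s₂ := by
  rcases b with _ | a <;> rcases r₁ with s₁ | _ <;> rcases r₂ with s₂ | _ <;>
    simp_all [hashAutomaton]

theorem hashAutomaton_m2_eq_inr_true {b : Option Λ} {r₁ r₂ : S ⊕ Prop}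
    (h : (hashAutomaton hφ P).m2 b r₁ r₂ = .inr True) :
    ∃ s₁ s₂, b = none ∧ r₁ = .inl s₁ ∧ r₂ = .inl s₂ ∧ P s₁ s₂ := by
  rcases b with _ | a <;> rcases r₁ with s₁ | _ <;> rcases r₂ with s₂ | _ <;>
    simp_all [hashAutomaton]

theorem exists_relabel_of_hashAutomaton_run_eq_inl :
    ∀ {W : LTree (Option Λ)} {s : S}, (hashAutomaton hφ P).run W = .inl s →
      ∃ X : LTree Λ, W = X.relabel some
  | .leaf (some a), _, _ => ⟨.leaf a, rfl⟩
  | .leaf none, _, h => nomatch h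
  | .node _ W₁ W₂, _, h => by
    obtain ⟨a, s₁, s₂, rfl, h₁, h₂⟩ := hashAutomaton_m2_eq_inl hφ P h
    obtain ⟨X₁, rfl⟩ := exists_relabel_of_hashAutomaton_run_eq_inl h₁
    obtain ⟨X₂, rfl⟩ := exists_relabel_of_hashAutomaton_run_eq_inl h₂
    exact ⟨.node a X₁ X₂, rfl⟩

theorem hashAutomaton_accepts_iff (W : LTree (Option Λ)) :
    (hashAutomaton hφ P).Accepts W ↔ ∃ X Y, P (φ X) (φ Y) ∧ W = LTree.hash X Y := by
  have hrun := hashAutomaton_run_relabel hφ P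
  constructor
  · intro (h : (hashAutomaton hφ P).run W = .inr True)
    cases W with
    | leaf b => cases b <;> simp [run, hashAutomaton] at h
    | node b W₁ W₂ =>
      obtain ⟨s₁, s₂, rfl, h₁, h₂, hP⟩ := hashAutomaton_m2_eq_inr_true hφ P h
      obtain ⟨X, rfl⟩ := exists_relabel_of_hashAutomaton_run_eq_inl hφ P h₁
      obtain ⟨Y, rfl⟩ := exists_relabel_of_hashAutomaton_run_eq_inl hφ P h₂
      rw [hrun] at h₁ h₂
      cases h₁; cases h₂
      exact ⟨X, Y, hP, rfl⟩
  · rintro ⟨X, Y, hXY, rfl⟩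
    show (hashAutomaton hφ P).m2 none _ _ = .inr True
    rw [hrun, hrun]
    exact congrArg Sum.inr (eq_true hXY)

end Hash

end TreeAutomaton

open TreeAutomaton in
theorem isRegularTreeLang_hash {S : Type} [Finite S] {φ : LTree Λ → S} (hφ : LTree.IsCongr φ)
    (R : LTree Λ → LTree Λ → Prop) [Std.Symm R]
    (hR : ∀ {X Y X' Y'}, φ X = φ X' → φ Y = φ Y' → R X Y → R X' Y') :
    IsRegularTreeLang {W | ∃ X Y, R X Y ∧ W = LTree.hash X Y} := by
  let P : S → S → Prop := fun s t => ∃ X Y, φ X = s ∧ φ Y = t ∧ R X Y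
  have : Std.Symm P := ⟨fun _ _ ⟨X, Y, hX, hY, h⟩ => ⟨Y, X, hY, hX, symm h⟩⟩
  refine ⟨hashAutomaton hφ P, fun W => ?_⟩
  rw [hashAutomaton_accepts_iff hφ P]
  exact exists₂_congr fun X Y => and_congr_left fun _ =>
    ⟨fun h => ⟨X, Y, rfl, rfl, h⟩, fun ⟨_, _, hX, hY, h⟩ => hR hX hY h⟩

open LTree in
theorem isRegularTreeLang_hash_of_monotone [Finite Λ] (R : LTree Λ → LTree Λ → Prop)
    [Std.Symm R] (hR : ∀ {X Y X' Y'}, TopCont X X' → TopCont Y Y' → R X Y → R X' Y') :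
    IsRegularTreeLang {W | ∃ X Y, R X Y ∧ W = hash X Y} := by
  obtain ⟨B, hBR, hB⟩ := (wellQuasiOrdered_topCont.prod wellQuasiOrdered_topCont
    ).exists_finset_basis {p : LTree Λ × LTree Λ | R p.1 p.2}
  set G := ⋃ q ∈ B, {U | TopCont U q.1} ∪ {U | TopCont U q.2}
  have hGfin : G.Finite := B.finite_toSet.biUnion fun q _ =>
    (finite_setOf_topCont q.1).union (finite_setOf_topCont q.2)
  have hGdown : ∀ {U V}, TopCont U V → V ∈ G → U ∈ G := by
    simp only [G, mem_iUnion₂, mem_union, mem_ofPred_eq]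
    rintro U V hUV ⟨q, hq, h | h⟩
    exacts [⟨q, hq, .inl (hUV.trans h)⟩, ⟨q, hq, .inr (hUV.trans h)⟩]
  have hBG : ∀ q ∈ B, q.1 ∈ G ∧ q.2 ∈ G := fun q hq =>
    ⟨mem_biUnion hq (.inl (.refl _)), mem_biUnion hq (.inr (.refl _))⟩
  have : Finite (𝒫 G) := hGfin.powerset.to_subtype
  refine isRegularTreeLang_hash
    (isCongr_profile fun a U₁ U₂ h => ⟨hGdown (.left_node ..) h, hGdown (.right_node ..) h⟩)
    R fun hX hY hXY => ?_
  obtain ⟨q, hq, hqX, hqY⟩ := hB (_, _) hXY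
  exact hR (topCont_of_profile_eq hX (hBG q hq).1 hqX) (topCont_of_profile_eq hY (hBG q hq).2 hqY)
    (hBR hq)

namespace Semibad

variable {L : Set (LTree Λ)}

instance : Std.Symm (Semibad L) :=
  ⟨fun _ _ h ⟨Z, hZ, hY, hX⟩ => h ⟨Z, hZ, hX, hY⟩⟩

theorem mono {X Y X' Y' : LTree Λ} (hX : TopCont X X') (hY : TopCont Y Y')
    (h : Semibad L X Y) : Semibad L X' Y' :=
  fun ⟨Z, hZ, hXZ, hYZ⟩ => h ⟨Z, hZ, hX.trans hXZ, hY.trans hYZ⟩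

end Semibad

end

/-- for ANY set `L` of trees over a finite label set `Λ` (not assumed regular),
the language `B_L' = { X # Y | (X, Y) is an L-semibad pair }` is regular over `Option Λ`. -/
theorem semibad_pairs_regular_of_any {Λ : Type} [Fintype Λ] (L : Set (LTree Λ)) :
    IsRegularTreeLang {W : LTree (Option Λ) |
      ∃ X Y : LTree Λ, Semibad L X Y ∧ W = LTree.hash X Y} :=
  isRegularTreeLang_hash_of_monotone (Semibad L) Semibad.mono
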